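/- Let β ≥ γ ≥ 0 with β + γ > 1. Then for all real numbers k₁, k₂, the integral ∫_ℝ ⟨τ−k₁⟩^{-β} ⟨τ−k₂⟩^{-γ} dτ is finite and bounded by C · φ_β(⌊|k₁−k₂|⌋) / ⟨k₁−k₂⟩^{γ} with C depending only on β, γ. -/

import Mathlib

open MeasureTheory

/-- Japanese bracket `⟨x⟩ = (1+x²)^{1/2}`. -/
noncomputable def jb (x : ℝ) : ℝ := Real.sqrt (1 + x ^ 2)

/-- `φ_β(k) = Σ_{|n| ≤ |k|} ⟨n⟩^{-β}`. -/
noncomputable def phi (β : ℝ) (k : ℤ) : ℝ :=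
  ∑ n ∈ Finset.Icc (-|k|) |k|, jb n ^ (-β)

/-
Write `K = |k₁ - k₂|`. Whichever of `k₁, k₂` is farther from `τ` is at distance at least `K / 2`,
so its bracket is at least `⟨K⟩ / 2` and at least the other bracket. Hence the integrand is
dominated by `2^γ w_{β,γ}(τ - k₁) + 2^β w_{γ,β}(τ - k₂)`, where
`w_{a,b}(s) = ⟨s⟩^{-a} min(⟨K⟩^{-b}, ⟨s⟩^{-b})` (`bracketWeight`). The weight is even; on
`0 < s ≤ K` it is at most `⟨K⟩^{-b} ⟨s⟩^{-a}`, whose integral is bounded by the Riemann sum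
`Σ_{0 ≤ i ≤ K} ⟨i⟩^{-a} ≤ φ_a(⌊K⌋)`; on `s > K` it is at most `⟨s⟩^{-(a+b)}`, whose integral is
`O(⟨K⟩^{1-a-b}) = O(⟨K⟩^{-b} ⟨K⟩^{1-a})`, and `⟨K⟩^{1-a} ≤ 2 Σ_{0 ≤ i ≤ K} ⟨i⟩^{-a}` because each
of the `⌊K⌋ + 1` terms is at least `⟨K⟩^{-a}`. Finally `γ ≤ β` gives
`⟨K⟩^{-β} φ_γ ≤ ⟨K⟩^{-γ} φ_β` termwise.
-/

open Set Filter Topology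

lemma jb_pos (x : ℝ) : 0 < jb x := Real.sqrt_pos.2 (by positivity)

lemma jb_rpow_nonneg (x c : ℝ) : 0 ≤ jb x ^ c := Real.rpow_nonneg (jb_pos x).le c

lemma jb_abs (x : ℝ) : jb |x| = jb x := by simp [jb, sq_abs]

lemma jb_le_jb {x y : ℝ} (h : |x| ≤ |y|) : jb x ≤ jb y := by
  unfold jb
  have := sq_le_sq.2 h
  gcongr

lemma jb_le_two_mul_jb {x y : ℝ} (h : |x| ≤ 2 * |y|) : jb x ≤ 2 * jb y := by
  have hsq : x ^ 2 ≤ 4 * y ^ 2 := by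
    have := pow_le_pow_left₀ (abs_nonneg x) h 2
    rw [sq_abs, mul_pow, sq_abs] at this
    linarith
  rw [jb, jb, show (2 : ℝ) = Real.sqrt 4 by norm_num, ← Real.sqrt_mul (by norm_num)]
  gcongr
  linarith

lemma jb_le_one_add_abs (x : ℝ) : jb x ≤ 1 + |x| := by
  rw [jb, Real.sqrt_le_left (by positivity)]
  nlinarith [sq_abs x, abs_nonneg x]

lemma one_add_abs_le_sqrt_two_mul_jb (x : ℝ) : 1 + |x| ≤ Real.sqrt 2 * jb x := by
  rw [jb, ← Real.sqrt_mul zero_le_two, Real.le_sqrt (by positivity) (by positivity)]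
  nlinarith [sq_abs x, sq_nonneg (|x| - 1)]

lemma continuous_jb : Continuous jb := by unfold jb; fun_prop

lemma continuous_jb_rpow (c : ℝ) : Continuous fun x => jb x ^ c :=
  continuous_jb.rpow_const fun x => Or.inl (jb_pos x).ne'

lemma integrable_jb_rpow_neg {p : ℝ} (hp : 1 < p) : Integrable fun x : ℝ => jb x ^ (-p) := by
  refine (integrable_rpow_neg_one_add_norm_sq (E := ℝ) (μ := volume) (r := p)
    (by simpa using hp)).congr (.of_forall fun x => ?_)
  simp only [jb, Real.sqrt_eq_rpow, ← Real.rpow_mul (by positivity : (0:ℝ) ≤ 1 + x ^ 2),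
    Real.norm_eq_abs, sq_abs]
  ring_nf

lemma integral_Ioi_add_one_rpow_neg {p K : ℝ} (hp : 1 < p) (hK : 0 ≤ K) :
    ∫ t in Ioi K, (t + 1) ^ (-p) = (K + 1) ^ (1 - p) / (p - 1) := by
  have hp' : 1 - p ≠ 0 := by linarith
  have hp'' : p - 1 ≠ 0 := by linarith
  have hderiv : ∀ t ∈ Ici K,
      HasDerivAt (fun t => (t + 1) ^ (1 - p) / (1 - p)) ((t + 1) ^ (-p)) t := by
    intro t ht
    refine ((((hasDerivAt_id t).add_const 1).rpow_const (p := 1 - p)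
      (Or.inl (by simp only [id]; linarith [mem_Ici.1 ht]))).div_const (1 - p)).congr_deriv ?_
    rw [one_mul, mul_div_cancel_left₀ _ hp', sub_sub_cancel_left]
    rfl
  have hlim : Tendsto (fun t : ℝ => (t + 1) ^ (1 - p) / (1 - p)) atTop (𝓝 (0 / (1 - p))) := by
    refine (((tendsto_rpow_neg_atTop (by linarith : 0 < p - 1)).comp
      (tendsto_atTop_add_const_right _ 1 tendsto_id)).div_const _).congr fun t => ?_
    simp [neg_sub]
  rw [integral_Ioi_of_hasDerivAt_of_tendsto' hderiv
    (integrableOn_add_rpow_Ioi_of_lt (by linarith) (by linarith)) hlim]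
  field_simp
  ring

lemma rpow_neg_le_rpow_mul_rpow_neg {b c x y : ℝ} (hb : 0 ≤ b) (hc : 0 < c) (hx : 0 < x)
    (hy : 0 ≤ y) (h : x ≤ c * y) : y ^ (-b) ≤ c ^ b * x ^ (-b) :=
  calc y ^ (-b) = c ^ b * (c * y) ^ (-b) := by
        rw [Real.mul_rpow hc.le hy, ← mul_assoc, ← Real.rpow_add hc, add_neg_cancel,
          Real.rpow_zero, one_mul]
    _ ≤ c ^ b * x ^ (-b) :=
        mul_le_mul_of_nonneg_left (Real.rpow_le_rpow_of_nonpos hx h (neg_nonpos.2 hb))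
          (by positivity)

lemma setIntegral_Ioi_jb_rpow_neg_le {p K : ℝ} (hp : 1 < p) (hK : 0 ≤ K) :
    ∫ t in Ioi K, jb t ^ (-p) ≤ Real.sqrt 2 ^ p / (p - 1) * jb K ^ (1 - p) := by
  have hbound : ∀ t ∈ Ioi K, jb t ^ (-p) ≤ Real.sqrt 2 ^ p * (t + 1) ^ (-p) := by
    intro t ht
    refine rpow_neg_le_rpow_mul_rpow_neg (by linarith) (by positivity)
      (by linarith [mem_Ioi.1 ht]) (jb_pos t).le ?_
    simpa [abs_of_nonneg (hK.trans (mem_Ioi.1 ht).le), add_comm]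
      using one_add_abs_le_sqrt_two_mul_jb t
  calc ∫ t in Ioi K, jb t ^ (-p) ≤ ∫ t in Ioi K, Real.sqrt 2 ^ p * (t + 1) ^ (-p) :=
        setIntegral_mono_on (integrable_jb_rpow_neg hp).integrableOn
          ((integrableOn_add_rpow_Ioi_of_lt (by linarith) (by linarith)).const_mul _)
          measurableSet_Ioi hbound
    _ = Real.sqrt 2 ^ p / (p - 1) * (K + 1) ^ (1 - p) := by
        rw [integral_const_mul, integral_Ioi_add_one_rpow_neg hp hK]
        ring
    _ ≤ Real.sqrt 2 ^ p / (p - 1) * jb K ^ (1 - p) := by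
        gcongr ?_ * ?_
        refine Real.rpow_le_rpow_of_nonpos (jb_pos K) ?_ (by linarith)
        simpa [abs_of_nonneg hK, add_comm] using jb_le_one_add_abs K

lemma antitoneOn_jb_rpow_neg {a : ℝ} (ha : 0 ≤ a) : AntitoneOn (fun x => jb x ^ (-a)) (Ici 0) :=
  fun x hx y hy hxy => Real.rpow_le_rpow_of_nonpos (jb_pos x)
    (jb_le_jb (by rwa [abs_of_nonneg hx, abs_of_nonneg hy])) (neg_nonpos.2 ha)

noncomputable def phiHalf (a : ℝ) (n : ℕ) : ℝ := ∑ i ∈ Finset.range (n + 1), jb i ^ (-a)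

lemma phiHalf_le_phi (a : ℝ) (n : ℕ) : phiHalf a n ≤ phi a n :=
  calc phiHalf a n = ∑ m ∈ (Finset.range (n + 1)).map Nat.castEmbedding, jb (m : ℤ) ^ (-a) := by
        simp [phiHalf]
    _ ≤ phi a n := by
        refine Finset.sum_le_sum_of_subset_of_nonneg (fun m hm => ?_)
          fun _ _ _ => jb_rpow_nonneg _ _
        simp only [Finset.mem_map, Finset.mem_range, Nat.castEmbedding_apply] at hm
        obtain ⟨i, hi, rfl⟩ := hm
        rw [Finset.mem_Icc, abs_of_nonneg (Int.natCast_nonneg n)]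
        omega

lemma jb_natCast_le_of_mem_range {K : ℝ} (hK : 0 ≤ K) {i : ℕ}
    (hi : i ∈ Finset.range (⌊K⌋₊ + 1)) : jb i ≤ jb K := by
  refine jb_le_jb ?_
  rw [Nat.abs_cast, abs_of_nonneg hK]
  exact (Nat.cast_le.2 (Nat.lt_succ_iff.1 (Finset.mem_range.1 hi))).trans (Nat.floor_le hK)

lemma setIntegral_Ioc_jb_rpow_neg_le {a : ℝ} (ha : 0 ≤ a) (K : ℝ) :
    ∫ t in Ioc 0 K, jb t ^ (-a) ≤ phiHalf a ⌊K⌋₊ := by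
  set n := ⌊K⌋₊ + 1
  have hKn : K ≤ n := by simpa [n] using (Nat.lt_floor_add_one K).le
  calc ∫ t in Ioc 0 K, jb t ^ (-a) ≤ ∫ t in Ioc 0 (n : ℝ), jb t ^ (-a) :=
        setIntegral_mono_set (continuous_jb_rpow _).integrableOn_Ioc
          (.of_forall fun _ => jb_rpow_nonneg _ _)
          (Ioc_subset_Ioc_right hKn).eventuallyLE
    _ = ∫ t in (0 : ℝ)..0 + n, jb t ^ (-a) := by
        rw [zero_add, intervalIntegral.integral_of_le n.cast_nonneg]
    _ ≤ ∑ i ∈ Finset.range n, jb (0 + i) ^ (-a) :=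
        ((antitoneOn_jb_rpow_neg ha).mono (Icc_subset_Ici_self)).integral_le_sum
    _ = phiHalf a ⌊K⌋₊ := by simp [phiHalf, n]

lemma jb_rpow_one_sub_le_phiHalf {a K : ℝ} (ha : 0 ≤ a) (hK : 0 ≤ K) :
    jb K ^ (1 - a) ≤ 2 * phiHalf a ⌊K⌋₊ := by
  have hjb : jb K ≤ 2 * (⌊K⌋₊ + 1) := by
    have := jb_le_one_add_abs K
    have := Nat.lt_floor_add_one K
    rw [abs_of_nonneg hK] at *
    linarith
  have hterm : ∀ i ∈ Finset.range (⌊K⌋₊ + 1), jb K ^ (-a) ≤ jb i ^ (-a) := fun i hi =>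
    Real.rpow_le_rpow_of_nonpos (jb_pos _) (jb_natCast_le_of_mem_range hK hi) (neg_nonpos.2 ha)
  calc jb K ^ (1 - a) = jb K * jb K ^ (-a) := by
        rw [sub_eq_add_neg, Real.rpow_add (jb_pos K), Real.rpow_one]
    _ ≤ 2 * ((⌊K⌋₊ + 1) * jb K ^ (-a)) := by
        rw [← mul_assoc]
        exact mul_le_mul_of_nonneg_right hjb (jb_rpow_nonneg K _)
    _ ≤ 2 * phiHalf a ⌊K⌋₊ := by
        gcongr
        simpa [phiHalf] using Finset.card_nsmul_le_sum _ _ _ hterm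

lemma jb_rpow_neg_mul_phiHalf_le {a b K : ℝ} (hab : a ≤ b) (hK : 0 ≤ K) :
    jb K ^ (-b) * phiHalf a ⌊K⌋₊ ≤ jb K ^ (-a) * phiHalf b ⌊K⌋₊ := by
  rw [phiHalf, phiHalf, Finset.mul_sum, Finset.mul_sum]
  refine Finset.sum_le_sum fun i hi => ?_
  have hpow : jb i ^ (b - a) ≤ jb K ^ (b - a) :=
    Real.rpow_le_rpow (jb_pos i).le (jb_natCast_le_of_mem_range hK hi) (sub_nonneg.2 hab)
  calc jb K ^ (-b) * jb i ^ (-a) = jb K ^ (-b) * jb i ^ (-b) * jb i ^ (b - a) := by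
        rw [mul_assoc, ← Real.rpow_add (jb_pos i)]; ring_nf
    _ ≤ jb K ^ (-b) * jb i ^ (-b) * jb K ^ (b - a) :=
        mul_le_mul_of_nonneg_left hpow
          (mul_nonneg (jb_rpow_nonneg K _) (jb_rpow_nonneg i _))
    _ = jb K ^ (-a) * jb i ^ (-b) := by
        rw [mul_right_comm, ← Real.rpow_add (jb_pos K)]; ring_nf

noncomputable def bracketWeight (a b K s : ℝ) : ℝ := jb s ^ (-a) * min (jb K ^ (-b)) (jb s ^ (-b))

section bracketWeight

variable {a b K : ℝ}

lemma bracketWeight_abs (s : ℝ) : bracketWeight a b K |s| = bracketWeight a b K s := by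
  simp only [bracketWeight, jb_abs]

lemma bracketWeight_nonneg (s : ℝ) : 0 ≤ bracketWeight a b K s :=
  mul_nonneg (jb_rpow_nonneg s _)
    (le_min (jb_rpow_nonneg K _) (jb_rpow_nonneg s _))

lemma bracketWeight_le_left (s : ℝ) : bracketWeight a b K s ≤ jb K ^ (-b) * jb s ^ (-a) := by
  rw [bracketWeight, mul_comm]
  exact mul_le_mul_of_nonneg_right (min_le_left _ _) (jb_rpow_nonneg s _)

lemma bracketWeight_le_right (s : ℝ) : bracketWeight a b K s ≤ jb s ^ (-(a + b)) := by
  rw [bracketWeight, neg_add, Real.rpow_add (jb_pos s)]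
  exact mul_le_mul_of_nonneg_left (min_le_right _ _) (jb_rpow_nonneg s _)

lemma continuous_bracketWeight : Continuous (bracketWeight a b K) :=
  (continuous_jb_rpow _).mul (continuous_const.min (continuous_jb_rpow _))

lemma integrable_bracketWeight (hab : 1 < a + b) : Integrable (bracketWeight a b K) :=
  (integrable_jb_rpow_neg hab).mono' continuous_bracketWeight.aestronglyMeasurable
    (.of_forall fun s => by
      rw [Real.norm_of_nonneg (bracketWeight_nonneg s)]
      exact bracketWeight_le_right s)

lemma setIntegral_Ioc_bracketWeight_le (ha : 0 ≤ a) :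
    ∫ s in Ioc 0 K, bracketWeight a b K s ≤ jb K ^ (-b) * phiHalf a ⌊K⌋₊ :=
  calc ∫ s in Ioc 0 K, bracketWeight a b K s ≤ ∫ s in Ioc 0 K, jb K ^ (-b) * jb s ^ (-a) :=
        setIntegral_mono_on continuous_bracketWeight.integrableOn_Ioc
          ((continuous_jb_rpow _).integrableOn_Ioc.const_mul _) measurableSet_Ioc
          fun s _ => bracketWeight_le_left s
    _ ≤ jb K ^ (-b) * phiHalf a ⌊K⌋₊ := by
        rw [integral_const_mul]
        exact mul_le_mul_of_nonneg_left (setIntegral_Ioc_jb_rpow_neg_le ha K)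
          (jb_rpow_nonneg K _)

lemma setIntegral_Ioi_bracketWeight_le (ha : 0 ≤ a) (hab : 1 < a + b) (hK : 0 ≤ K) :
    ∫ s in Ioi K, bracketWeight a b K s ≤
      2 * Real.sqrt 2 ^ (a + b) / (a + b - 1) * (jb K ^ (-b) * phiHalf a ⌊K⌋₊) :=
  calc ∫ s in Ioi K, bracketWeight a b K s ≤ ∫ s in Ioi K, jb s ^ (-(a + b)) :=
        setIntegral_mono_on (integrable_bracketWeight hab).integrableOn
          (integrable_jb_rpow_neg hab).integrableOn measurableSet_Ioi
          fun s _ => bracketWeight_le_right s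
    _ ≤ Real.sqrt 2 ^ (a + b) / (a + b - 1) * (jb K ^ (-b) * jb K ^ (1 - a)) := by
        rw [← Real.rpow_add (jb_pos K), show -b + (1 - a) = 1 - (a + b) by ring]
        exact setIntegral_Ioi_jb_rpow_neg_le hab hK
    _ ≤ Real.sqrt 2 ^ (a + b) / (a + b - 1) * (jb K ^ (-b) * (2 * phiHalf a ⌊K⌋₊)) := by
        have : 0 < a + b - 1 := by linarith
        gcongr
        · exact jb_rpow_nonneg K _
        · exact jb_rpow_one_sub_le_phiHalf ha hK
    _ = 2 * Real.sqrt 2 ^ (a + b) / (a + b - 1) * (jb K ^ (-b) * phiHalf a ⌊K⌋₊) := by ring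

lemma integral_bracketWeight_le (ha : 0 ≤ a) (hab : 1 < a + b) (hK : 0 ≤ K) :
    ∫ s, bracketWeight a b K s ≤
      2 * (1 + 2 * Real.sqrt 2 ^ (a + b) / (a + b - 1)) * (jb K ^ (-b) * phiHalf a ⌊K⌋₊) := by
  have hint := integrable_bracketWeight (K := K) hab
  calc ∫ s, bracketWeight a b K s = 2 * ∫ s in Ioi 0, bracketWeight a b K s := by
        rw [← integral_comp_abs]
        simp only [bracketWeight_abs]
    _ = 2 * ((∫ s in Ioc 0 K, bracketWeight a b K s) + ∫ s in Ioi K, bracketWeight a b K s) := by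
        rw [← Ioc_union_Ioi_eq_Ioi hK, setIntegral_union Ioc_disjoint_Ioi_same measurableSet_Ioi
          hint.integrableOn hint.integrableOn]
    _ ≤ _ := by
        have := setIntegral_Ioc_bracketWeight_le (b := b) (K := K) ha
        have := setIntegral_Ioi_bracketWeight_le ha hab hK
        linarith

end bracketWeight

lemma exists_integral_bracketWeight_le {a b : ℝ} (ha : 0 ≤ a) (hab : 1 < a + b) :
    ∃ C, 0 < C ∧ ∀ K, 0 ≤ K →
      ∫ s, bracketWeight a b K s ≤ C * (jb K ^ (-b) * phiHalf a ⌊K⌋₊) := by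
  have : 0 < a + b - 1 := by linarith
  exact ⟨_, by positivity, fun K hK => integral_bracketWeight_le ha hab hK⟩

lemma bracket_mul_le_bracketWeight {a b x y : ℝ} (hb : 0 ≤ b) (hxy : |x| ≤ |y|) :
    jb x ^ (-a) * jb y ^ (-b) ≤ 2 ^ b * bracketWeight a b |x - y| x := by
  have hK : jb |x - y| ≤ 2 * jb y := by
    refine jb_le_two_mul_jb ?_
    rw [abs_abs]
    linarith [abs_sub x y]
  have hx : jb x ≤ 2 * jb y := by linarith [jb_le_jb hxy, jb_pos y]
  have hy : jb y ^ (-b) ≤ 2 ^ b * min (jb |x - y| ^ (-b)) (jb x ^ (-b)) := by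
    rw [mul_min_of_nonneg _ _ (by positivity)]
    exact le_min (rpow_neg_le_rpow_mul_rpow_neg hb two_pos (jb_pos _) (jb_pos y).le hK)
      (rpow_neg_le_rpow_mul_rpow_neg hb two_pos (jb_pos _) (jb_pos y).le hx)
  rw [bracketWeight, mul_left_comm]
  exact mul_le_mul_of_nonneg_left hy (jb_rpow_nonneg x _)

lemma bracket_mul_le_add_bracketWeight {a b : ℝ} (ha : 0 ≤ a) (hb : 0 ≤ b) (x y : ℝ) :
    jb x ^ (-a) * jb y ^ (-b) ≤
      2 ^ b * bracketWeight a b |x - y| x + 2 ^ a * bracketWeight b a |x - y| y := by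
  have h₁ : 0 ≤ 2 ^ b * bracketWeight a b |x - y| x :=
    mul_nonneg (by positivity) (bracketWeight_nonneg x)
  have h₂ : 0 ≤ 2 ^ a * bracketWeight b a |x - y| y :=
    mul_nonneg (by positivity) (bracketWeight_nonneg y)
  rcases le_total |x| |y| with hxy | hyx
  · linarith [bracket_mul_le_bracketWeight (a := a) hb hxy]
  · have := bracket_mul_le_bracketWeight (a := b) ha hyx
    rw [abs_sub_comm, mul_comm] at this
    linarith

lemma integral_bracket_mul_bracket_le {a b : ℝ} (ha : 0 ≤ a) (hb : 0 ≤ b) (hab : 1 < a + b)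
    (k₁ k₂ : ℝ) :
    Integrable (fun τ : ℝ => jb (τ - k₁) ^ (-a) * jb (τ - k₂) ^ (-b)) ∧
      ∫ τ, jb (τ - k₁) ^ (-a) * jb (τ - k₂) ^ (-b) ≤
        2 ^ b * (∫ s, bracketWeight a b |k₁ - k₂| s) +
          2 ^ a * ∫ s, bracketWeight b a |k₁ - k₂| s := by
  set K := |k₁ - k₂|
  have hw₁ := ((integrable_bracketWeight (K := K) hab).comp_sub_right k₁).const_mul (2 ^ b)
  have hw₂ := ((integrable_bracketWeight (K := K) (add_comm a b ▸ hab)).comp_sub_right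
    k₂).const_mul (2 ^ a)
  have hdom : ∀ τ, jb (τ - k₁) ^ (-a) * jb (τ - k₂) ^ (-b) ≤
      2 ^ b * bracketWeight a b K (τ - k₁) + 2 ^ a * bracketWeight b a K (τ - k₂) := fun τ => by
    simpa [K, abs_sub_comm] using bracket_mul_le_add_bracketWeight ha hb (τ - k₁) (τ - k₂)
  have hf : Integrable fun τ : ℝ => jb (τ - k₁) ^ (-a) * jb (τ - k₂) ^ (-b) :=
    (hw₁.add hw₂).mono' (((continuous_jb_rpow _).comp (continuous_sub_right k₁)).mul
      ((continuous_jb_rpow _).comp (continuous_sub_right k₂))).aestronglyMeasurable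
      (.of_forall fun τ => by
        rw [Real.norm_of_nonneg (mul_nonneg (jb_rpow_nonneg _ _)
          (jb_rpow_nonneg _ _))]
        exact hdom τ)
  refine ⟨hf, (integral_mono hf (hw₁.add hw₂) hdom).trans_eq ?_⟩
  rw [integral_add' hw₁ hw₂, integral_const_mul, integral_const_mul, integral_sub_right_eq_self,
    integral_sub_right_eq_self]

theorem integral_bracket_convolution_bound (β γ : ℝ) (hγ : 0 ≤ γ) (hβγ : γ ≤ β)
    (hsum : 1 < β + γ) :
    ∃ C : ℝ, 0 < C ∧ ∀ k₁ k₂ : ℝ,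
      Integrable (fun τ : ℝ => jb (τ - k₁) ^ (-β) * jb (τ - k₂) ^ (-γ)) ∧
      ∫ τ : ℝ, jb (τ - k₁) ^ (-β) * jb (τ - k₂) ^ (-γ)
        ≤ C * phi β ⌊|k₁ - k₂|⌋ / jb (k₁ - k₂) ^ γ := by
  have hβ : 0 ≤ β := hγ.trans hβγ
  obtain ⟨C₁, hC₁, h₁⟩ := exists_integral_bracketWeight_le hβ hsum
  obtain ⟨C₂, hC₂, h₂⟩ := exists_integral_bracketWeight_le hγ (add_comm β γ ▸ hsum)
  refine ⟨2 ^ γ * C₁ + 2 ^ β * C₂, by positivity, fun k₁ k₂ => ?_⟩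
  obtain ⟨hf, hle⟩ := integral_bracket_mul_bracket_le hβ hγ hsum k₁ k₂
  set K := |k₁ - k₂|
  have hK : 0 ≤ K := abs_nonneg _
  have hcomp := mul_le_mul_of_nonneg_left (jb_rpow_neg_mul_phiHalf_le hβγ hK)
    (by positivity : 0 ≤ 2 ^ β * C₂)
  refine ⟨hf, hle.trans ?_⟩
  calc 2 ^ γ * (∫ s, bracketWeight β γ K s) + 2 ^ β * ∫ s, bracketWeight γ β K s
      ≤ 2 ^ γ * (C₁ * (jb K ^ (-γ) * phiHalf β ⌊K⌋₊)) +
          2 ^ β * (C₂ * (jb K ^ (-β) * phiHalf γ ⌊K⌋₊)) := by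
        gcongr
        exacts [h₁ K hK, h₂ K hK]
    _ ≤ (2 ^ γ * C₁ + 2 ^ β * C₂) * (jb K ^ (-γ) * phi β ⌊K⌋) := by
        rw [← Int.natCast_floor_eq_floor hK]
        have := mul_le_mul_of_nonneg_left (phiHalf_le_phi β ⌊K⌋₊)
          (mul_nonneg (by positivity : 0 ≤ 2 ^ γ * C₁ + 2 ^ β * C₂)
            (jb_rpow_nonneg K (-γ)))
        linarith
    _ = (2 ^ γ * C₁ + 2 ^ β * C₂) * phi β ⌊K⌋ / jb (k₁ - k₂) ^ γ := by
        rw [Real.rpow_neg (jb_pos K).le, jb_abs]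
        ring
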